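/- lim_{η→0⁺} sup_{x∈ℝ³} ∫_0^1 ∫_{ℝ³} (2πσ)^{−3/2} e^{−‖y−x‖²/(2σ)} (1/‖y‖ − 1/√(η² + ‖y‖²)) dy dσ = 0; that is, the expected time integral over [0,1] of the Coulomb-smoothing error Y_η along a three-dimensional Brownian path, uniformly over the starting point, tends to 0 as η → 0. -/

import Mathlib

/-!
Split the space integral at a radius `δ`. Inside the ball `B(0, δ)` bound the heat kernel by
its maximum `(2πσ)^{-3/2}` and the error by `1/‖y‖`, whose integral over the ball is `2πδ²`;
outside it the error is at most `η²/(2δ³)` and the heat kernel has total mass one. The choice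
`δ = η^{2/5} σ^{3/10}` balances the two terms and gives the bound `η^{4/5} σ^{-9/10}`,
uniformly in the starting point; `σ^{-9/10}` is integrable on `(0, 1]`.
-/

open MeasureTheory Real Filter Topology Metric Module

noncomputable section

local notation "ℝ³" => EuclideanSpace ℝ (Fin 3)

section HeatKernel

variable {E : Type*} [NormedAddCommGroup E] [InnerProductSpace ℝ E]

def heatKernel (σ : ℝ) (x y : E) : ℝ :=
  (2 * π * σ) ^ (-(finrank ℝ E : ℝ) / 2) * exp (-‖y - x‖ ^ 2 / (2 * σ))

theorem heatKernel_nonneg {σ : ℝ} (hσ : 0 ≤ σ) (x y : E) : 0 ≤ heatKernel σ x y := by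
  unfold heatKernel
  positivity

theorem heatKernel_le {σ : ℝ} (hσ : 0 ≤ σ) (x y : E) :
    heatKernel σ x y ≤ (2 * π * σ) ^ (-(finrank ℝ E : ℝ) / 2) := by
  unfold heatKernel
  refine mul_le_of_le_one_right (by positivity) (exp_le_one_iff.2 ?_)
  rw [neg_div]
  exact neg_nonpos.2 (by positivity)

variable [FiniteDimensional ℝ E] [MeasurableSpace E] [BorelSpace E]

theorem integral_heatKernel {σ : ℝ} (hσ : 0 < σ) (x : E) : ∫ y, heatKernel σ x y = 1 := by
  have hgauss := GaussianFourier.integral_rexp_neg_mul_sq_norm (V := E) (b := 1 / (2 * σ))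
    (by positivity)
  rw [show π / (1 / (2 * σ)) = 2 * π * σ by field_simp] at hgauss
  have hexp (y : E) : exp (-‖y‖ ^ 2 / (2 * σ)) = exp (-(1 / (2 * σ)) * ‖y‖ ^ 2) := by
    ring_nf
  simp only [heatKernel]
  rw [integral_const_mul,
    integral_sub_right_eq_self (fun y : E => exp (-‖y‖ ^ 2 / (2 * σ))) x]
  simp only [hexp]
  rw [hgauss, ← rpow_add (by positivity), neg_div, neg_add_cancel, rpow_zero]

theorem integrable_heatKernel {σ : ℝ} (hσ : 0 < σ) (x : E) : Integrable (heatKernel σ x) :=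
  integrable_of_integral_eq_one (integral_heatKernel hσ x)

end HeatKernel

theorem integral_ball_norm_inv {E : Type*} [NormedAddCommGroup E] [NormedSpace ℝ E]
    [FiniteDimensional ℝ E] [MeasureSpace E] [BorelSpace E]
    [(volume : Measure E).IsAddHaarMeasure] {k : ℕ} (hk : finrank ℝ E = k + 2) {δ : ℝ}
    (hδ : 0 ≤ δ) :
    ∫ y in ball (0 : E) δ, ‖y‖⁻¹ =
      (k + 2) * volume.real (ball (0 : E) 1) * (δ ^ (k + 1) / (k + 1)) := by
  have : Nontrivial E := Module.nontrivial_of_finrank_pos (R := ℝ) (by omega)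
  have hradial : (ball (0 : E) δ).indicator (fun y => ‖y‖⁻¹) =
      fun y => (Set.Iio δ).indicator (·⁻¹) ‖y‖ := by
    ext y
    simp [Set.indicator]
  have hpolar :
      ∫ r in Set.Ioi (0 : ℝ), r ^ (finrank ℝ E - 1) • (Set.Iio δ).indicator (·⁻¹) r =
        ∫ r in (0)..δ, r ^ k := by
    rw [intervalIntegral.integral_of_le hδ, integral_Ioc_eq_integral_Ioo, ← Set.Ioi_inter_Iio,
      ← setIntegral_indicator measurableSet_Iio]
    refine setIntegral_congr_fun measurableSet_Ioi fun r (hr : 0 < r) => ?_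
    by_cases hrδ : r < δ
    · simp [hrδ, hk, pow_succ, hr.ne']
    · simp [hrδ]
  rw [← integral_indicator measurableSet_ball, hradial, integral_fun_norm_addHaar, nsmul_eq_mul,
    smul_eq_mul, mul_assoc, hpolar, integral_pow, hk]
  simp

theorem integral_ball_norm_inv_fin_three {δ : ℝ} (hδ : 0 ≤ δ) :
    ∫ y in ball (0 : ℝ³) δ, ‖y‖⁻¹ = 2 * π * δ ^ 2 := by
  rw [integral_ball_norm_inv (k := 1) finrank_euclideanSpace_fin hδ, measureReal_def,
    EuclideanSpace.volume_ball_fin_three, ENNReal.toReal_mul, ENNReal.toReal_pow,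
    ENNReal.toReal_ofReal zero_le_one, ENNReal.toReal_ofReal (by positivity)]
  ring

def coulombSmoothingError (η r : ℝ) : ℝ := 1 / r - 1 / √(η ^ 2 + r ^ 2)

theorem coulombSmoothingError_nonneg (η : ℝ) {r : ℝ} (hr : 0 < r) :
    0 ≤ coulombSmoothingError η r := by
  unfold coulombSmoothingError
  have : r ≤ √(η ^ 2 + r ^ 2) := le_sqrt_of_sq_le (by nlinarith)
  linarith [one_div_le_one_div_of_le hr this]

theorem coulombSmoothingError_le_inv (η r : ℝ) : coulombSmoothingError η r ≤ r⁻¹ := by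
  unfold coulombSmoothingError
  have : 0 ≤ 1 / √(η ^ 2 + r ^ 2) := by positivity
  linarith [one_div r]

theorem coulombSmoothingError_le {η r : ℝ} (hr : 0 < r) :
    coulombSmoothingError η r ≤ η ^ 2 / (2 * r ^ 3) := by
  unfold coulombSmoothingError
  set s := √(η ^ 2 + r ^ 2)
  have hrs : r ≤ s := le_sqrt_of_sq_le (by nlinarith)
  have hs : s ^ 2 = η ^ 2 + r ^ 2 := sq_sqrt (by positivity)
  have hs0 : 0 < s := hr.trans_le hrs
  calc 1 / r - 1 / s = η ^ 2 / (r * s * (s + r)) := by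
        field_simp
        linear_combination hs
    _ ≤ η ^ 2 / (2 * r ^ 3) := by
        gcongr η ^ 2 / ?_
        nlinarith [mul_le_mul hrs hrs hr.le hs0.le]

theorem heatKernel_mul_coulombSmoothingError_ae_nonneg (η : ℝ) {σ : ℝ} (hσ : 0 ≤ σ)
    (x : ℝ³) : 0 ≤ᵐ[volume] fun y => heatKernel σ x y * coulombSmoothingError η ‖y‖ := by
  filter_upwards [Measure.ae_ne volume 0] with y hy
  exact mul_nonneg (heatKernel_nonneg hσ x y)
    (coulombSmoothingError_nonneg η (norm_pos_iff.2 hy))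

theorem heatKernel_mul_coulombSmoothingError_le_add (η : ℝ) {σ δ : ℝ} (hσ : 0 ≤ σ)
    (hδ : 0 < δ) (x : ℝ³) {y : ℝ³} (hy : y ≠ 0) :
    heatKernel σ x y * coulombSmoothingError η ‖y‖ ≤
      (2 * π * σ) ^ (-3 / 2 : ℝ) * (ball (0 : ℝ³) δ).indicator (fun y => ‖y‖⁻¹) y +
        η ^ 2 / (2 * δ ^ 3) * heatKernel σ x y := by
  have hy : 0 < ‖y‖ := norm_pos_iff.2 hy
  have hY := coulombSmoothingError_nonneg η hy
  have hp := heatKernel_nonneg hσ x y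
  by_cases hyδ : ‖y‖ < δ
  · have hmax : heatKernel σ x y ≤ (2 * π * σ) ^ (-3 / 2 : ℝ) := by
      simpa [finrank_euclideanSpace_fin, neg_div] using heatKernel_le hσ x y
    rw [Set.indicator_of_mem (mem_ball_zero_iff.2 hyδ)]
    have := mul_le_mul hmax (coulombSmoothingError_le_inv η ‖y‖) hY (hp.trans hmax)
    have : 0 ≤ η ^ 2 / (2 * δ ^ 3) * heatKernel σ x y := by positivity
    linarith
  · have hYfar : coulombSmoothingError η ‖y‖ ≤ η ^ 2 / (2 * δ ^ 3) := by
      refine (coulombSmoothingError_le hy).trans ?_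
      gcongr
      exact not_lt.1 hyδ
    rw [Set.indicator_of_notMem (mt mem_ball_zero_iff.1 hyδ), mul_zero, zero_add,
      mul_comm _ (heatKernel σ x y)]
    exact mul_le_mul_of_nonneg_left hYfar hp

theorem integral_heatKernel_mul_coulombSmoothingError_le_of_radius (η : ℝ) {σ δ : ℝ}
    (hσ : 0 < σ) (hδ : 0 < δ) (x : ℝ³) :
    ∫ y, heatKernel σ x y * coulombSmoothingError η ‖y‖ ≤
      (2 * π * σ) ^ (-3 / 2 : ℝ) * (2 * π * δ ^ 2) + η ^ 2 / (2 * δ ^ 3) := by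
  have hnear : Integrable ((ball (0 : ℝ³) δ).indicator fun y => ‖y‖⁻¹) := by
    refine IntegrableOn.integrable_indicator (Integrable.of_integral_ne_zero ?_) measurableSet_ball
    rw [integral_ball_norm_inv_fin_three hδ.le]
    positivity
  calc ∫ y, heatKernel σ x y * coulombSmoothingError η ‖y‖
      ≤ ∫ y, (2 * π * σ) ^ (-3 / 2 : ℝ) * (ball (0 : ℝ³) δ).indicator (fun y => ‖y‖⁻¹) y +
          η ^ 2 / (2 * δ ^ 3) * heatKernel σ x y := by
        refine integral_mono_of_nonneg (heatKernel_mul_coulombSmoothingError_ae_nonneg η hσ.le x)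
          ((hnear.const_mul _).add ((integrable_heatKernel hσ x).const_mul _)) ?_
        filter_upwards [Measure.ae_ne volume 0] with y hy
        exact heatKernel_mul_coulombSmoothingError_le_add η hσ.le hδ x hy
    _ = (2 * π * σ) ^ (-3 / 2 : ℝ) * (2 * π * δ ^ 2) + η ^ 2 / (2 * δ ^ 3) := by
        rw [integral_add (hnear.const_mul _) ((integrable_heatKernel hσ x).const_mul _),
          integral_const_mul, integral_const_mul, integral_indicator measurableSet_ball,
          integral_ball_norm_inv_fin_three hδ.le, integral_heatKernel hσ, mul_one]

theorem integral_heatKernel_mul_coulombSmoothingError_le {η σ : ℝ} (hη : 0 < η) (hσ : 0 < σ)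
    (x : ℝ³) :
    ∫ y, heatKernel σ x y * coulombSmoothingError η ‖y‖ ≤
      η ^ (4 / 5 : ℝ) * σ ^ (-9 / 10 : ℝ) := by
  set δ := η ^ (2 / 5 : ℝ) * σ ^ (3 / 10 : ℝ)
  have hδ2 : δ ^ 2 = η ^ (4 / 5 : ℝ) * σ ^ (3 / 5 : ℝ) := by
    rw [mul_pow, ← rpow_mul_natCast hη.le, ← rpow_mul_natCast hσ.le]
    norm_num
  have hδ3 : δ ^ 3 = η ^ (6 / 5 : ℝ) * σ ^ (9 / 10 : ℝ) := by
    rw [mul_pow, ← rpow_mul_natCast hη.le, ← rpow_mul_natCast hσ.le]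
    norm_num
  have h2π : 0 < 2 * π := by positivity
  have hnear : (2 * π * σ) ^ (-3 / 2 : ℝ) * (2 * π * δ ^ 2) =
      (2 * π) ^ (-1 / 2 : ℝ) * (η ^ (4 / 5 : ℝ) * σ ^ (-9 / 10 : ℝ)) := by
    have h2πpow : (2 * π) ^ (-3 / 2 : ℝ) * (2 * π) = (2 * π) ^ (-1 / 2 : ℝ) := by
      rw [← rpow_add_one h2π.ne']
      norm_num
    have hσpow : σ ^ (-3 / 2 : ℝ) * σ ^ (3 / 5 : ℝ) = σ ^ (-9 / 10 : ℝ) := by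
      rw [← rpow_add hσ]
      norm_num
    rw [hδ2, mul_rpow h2π.le hσ.le, ← h2πpow, ← hσpow]
    ring
  have hfar : η ^ 2 / (2 * δ ^ 3) = 1 / 2 * (η ^ (4 / 5 : ℝ) * σ ^ (-9 / 10 : ℝ)) := by
    have hηpow : η ^ 2 = η ^ (4 / 5 : ℝ) * η ^ (6 / 5 : ℝ) := by
      rw [← rpow_add hη, ← rpow_natCast]
      norm_num
    rw [hδ3, hηpow, show (-9 / 10 : ℝ) = -(9 / 10) by norm_num, rpow_neg hσ.le]
    field_simp
  have hconst : (2 * π) ^ (-1 / 2 : ℝ) ≤ 1 / 2 := by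
    rw [show (-1 / 2 : ℝ) = -(1 / 2) by norm_num, rpow_neg h2π.le, ← sqrt_eq_rpow, one_div]
    refine inv_anti₀ two_pos (le_sqrt_of_sq_le ?_)
    nlinarith [pi_gt_three]
  refine (integral_heatKernel_mul_coulombSmoothingError_le_of_radius η hσ
    (δ := δ) (by positivity) x).trans ?_
  rw [hnear, hfar, ← add_mul]
  exact mul_le_of_le_one_left (by positivity) (by linarith)

theorem setIntegral_Ioc_rpow_neg_nine_div_ten :
    ∫ σ in Set.Ioc (0 : ℝ) 1, σ ^ (-9 / 10 : ℝ) = 10 := by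
  rw [← intervalIntegral.integral_of_le zero_le_one, integral_rpow (Or.inl (by norm_num)),
    one_rpow, zero_rpow (by norm_num)]
  norm_num

theorem setIntegral_Ioc_integral_heatKernel_mul_coulombSmoothingError_le {η : ℝ} (hη : 0 < η)
    (x : ℝ³) :
    ∫ σ in Set.Ioc (0 : ℝ) 1, ∫ y, heatKernel σ x y * coulombSmoothingError η ‖y‖ ≤
      10 * η ^ (4 / 5 : ℝ) := by
  have hint : IntegrableOn (fun σ : ℝ => σ ^ (-9 / 10 : ℝ)) (Set.Ioc 0 1) :=
    Integrable.of_integral_ne_zero (by rw [setIntegral_Ioc_rpow_neg_nine_div_ten]; norm_num)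
  calc ∫ σ in Set.Ioc (0 : ℝ) 1, ∫ y, heatKernel σ x y * coulombSmoothingError η ‖y‖
      ≤ ∫ σ in Set.Ioc (0 : ℝ) 1, η ^ (4 / 5 : ℝ) * σ ^ (-9 / 10 : ℝ) := by
        refine integral_mono_of_nonneg ?_ (hint.const_mul _) ?_ <;>
          refine (ae_restrict_iff' measurableSet_Ioc).2 (.of_forall fun σ (hσ : σ ∈ _) => ?_)
        · exact integral_nonneg_of_ae
            (heatKernel_mul_coulombSmoothingError_ae_nonneg η hσ.1.le x)
        · exact integral_heatKernel_mul_coulombSmoothingError_le hη hσ.1 x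
    _ = 10 * η ^ (4 / 5 : ℝ) := by
        rw [integral_const_mul, setIntegral_Ioc_rpow_neg_nine_div_ten, mul_comm]

end

/-- The expected time integral over `[0,1]` of the Coulomb-smoothing error
`Y_η = 1/‖·‖ - 1/√(η² + ‖·‖²)` along three-dimensional Brownian motion, uniformly over the
starting point `x`, tends to `0` as `η → 0⁺`. -/
theorem coulomb_smoothing_error_uniform_limit :
    Filter.Tendsto (fun η : ℝ =>
        ⨆ x : EuclideanSpace ℝ (Fin 3),
          ∫ σ in Set.Ioc (0 : ℝ) 1, ∫ y : EuclideanSpace ℝ (Fin 3),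
            (2 * Real.pi * σ) ^ (-(3 : ℝ) / 2) * Real.exp (-‖y - x‖ ^ 2 / (2 * σ)) *
              (1 / ‖y‖ - 1 / Real.sqrt (η ^ 2 + ‖y‖ ^ 2)))
      (𝓝[>] (0 : ℝ)) (𝓝 0) := by
  have hkernel (η σ : ℝ) (x y : EuclideanSpace ℝ (Fin 3)) :
      (2 * π * σ) ^ (-(3 : ℝ) / 2) * exp (-‖y - x‖ ^ 2 / (2 * σ)) *
        (1 / ‖y‖ - 1 / √(η ^ 2 + ‖y‖ ^ 2)) =
          heatKernel σ x y * coulombSmoothingError η ‖y‖ := by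
    simp [heatKernel, coulombSmoothingError]
  simp only [hkernel]
  have hbound : Tendsto (fun η : ℝ => 10 * η ^ (4 / 5 : ℝ)) (𝓝[>] 0) (𝓝 0) := by
    simpa using ((continuous_rpow_const (by norm_num)).tendsto' 0 0 (zero_rpow (by norm_num))
      |>.const_mul 10).mono_left nhdsWithin_le_nhds
  refine squeeze_zero' ?_ ?_ hbound <;>
    filter_upwards [self_mem_nhdsWithin] with η (hη : 0 < η)
  · exact Real.iSup_nonneg fun x => setIntegral_nonneg measurableSet_Ioc fun σ hσ =>
      integral_nonneg_of_ae (heatKernel_mul_coulombSmoothingError_ae_nonneg η hσ.1.le x)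
  · exact Real.iSup_le (setIntegral_Ioc_integral_heatKernel_mul_coulombSmoothingError_le hη)
      (by positivity)
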